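/- Ky Fan minimum principle: for a real symmetric N×N matrix A with eigenvalues λ₁ ≤ ⋯ ≤ λ_N, the sum λ₁ + ⋯ + λ_q equals the minimum of tr(Vᵀ A V) over all N×q matrices V with orthonormal columns. -/

import Mathlib

/-!
Diagonalize `A = U D Uᵀ` with `U` orthogonal. For `V` with orthonormal columns, `W = Uᵀ V` again
has orthonormal columns and `tr (Vᵀ A V) = ∑ᵢ λᵢ sᵢ` with `sᵢ = ∑ⱼ Wᵢⱼ²`. Since `W Wᵀ` is an
orthogonal projection of rank `q`, the weights satisfy `0 ≤ sᵢ ≤ 1` and `∑ᵢ sᵢ = q`, and such a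
weighted sum of the `λᵢ` is smallest when the whole weight sits on the `q` smallest ones. That
minimum is attained by taking for `V` the corresponding `q` eigenvectors.
-/

open Matrix Finset

theorem sum_le_sum_mul_of_forall_le_of_forall_ge {ι : Type*} [Fintype ι] [DecidableEq ι]
    (S : Finset ι) {μ t : ι → ℝ} {c : ℝ} (hS : ∀ i ∈ S, μ i ≤ c) (hSc : ∀ i ∉ S, c ≤ μ i)
    (ht0 : ∀ i, 0 ≤ t i) (ht1 : ∀ i, t i ≤ 1) (hts : ∑ i, t i = #S) :
    ∑ i ∈ S, μ i ≤ ∑ i, μ i * t i := by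
  have inside : ∑ i ∈ S, (μ i - c) ≤ ∑ i ∈ S, (μ i - c) * t i :=
    sum_le_sum fun i hi => by nlinarith [hS i hi, ht1 i]
  have outside : 0 ≤ ∑ i ∈ Sᶜ, (μ i - c) * t i :=
    sum_nonneg fun i hi => mul_nonneg (sub_nonneg.2 (hSc i (mem_compl.1 hi))) (ht0 i)
  have split : ∑ i, μ i * t i =
      ∑ i ∈ S, (μ i - c) * t i + ∑ i ∈ Sᶜ, (μ i - c) * t i + c * #S := by
    rw [sum_add_sum_compl, ← hts, mul_sum, ← sum_add_distrib]
    exact sum_congr rfl fun i _ => by ring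
  have : ∑ i ∈ S, μ i = ∑ i ∈ S, (μ i - c) + c * #S := by
    rw [sum_sub_distrib, sum_const, nsmul_eq_mul]; ring
  linarith

theorem Monotone.sum_castLE_le_sum_mul {N q : ℕ} (hqN : q ≤ N) {μ : Fin N → ℝ}
    (hμ : Monotone μ) {t : Fin N → ℝ} (ht0 : ∀ i, 0 ≤ t i) (ht1 : ∀ i, t i ≤ 1)
    (hts : ∑ i, t i = q) :
    ∑ j : Fin q, μ (Fin.castLE hqN j) ≤ ∑ i, μ i * t i := by
  set S := univ.map (Fin.castLEEmb hqN)
  have hS : ∀ i, i ∈ S ↔ (i : ℕ) < q := fun i =>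
    ⟨fun hi => by obtain ⟨j, -, rfl⟩ := mem_map.1 hi; exact j.isLt,
      fun hi => mem_map.2 ⟨⟨i, hi⟩, mem_univ _, rfl⟩⟩
  obtain ⟨c, hlow, hhigh⟩ :
      ∃ c, (∀ i : Fin N, (i : ℕ) < q → μ i ≤ c) ∧ ∀ i : Fin N, q ≤ i → c ≤ μ i := by
    cases q with
    | zero =>
      obtain ⟨c, hc⟩ := Finite.exists_ge μ
      exact ⟨c, by simp, fun i _ => hc i⟩
    | succ k =>
      exact ⟨μ ⟨k, hqN⟩, fun i hi => hμ (Fin.le_def.2 (by simp; omega)),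
        fun i hi => hμ (Fin.le_def.2 (by simp; omega))⟩
  calc ∑ j : Fin q, μ (Fin.castLE hqN j) = ∑ i ∈ S, μ i := by rw [sum_map]; rfl
    _ ≤ ∑ i, μ i * t i :=
      sum_le_sum_mul_of_forall_le_of_forall_ge S (fun i hi => hlow i ((hS i).1 hi))
        (fun i hi => hhigh i (not_lt.1 (mt (hS i).2 hi))) ht0 ht1 (by simpa [S] using hts)

namespace Matrix

variable {m n : Type*} [Fintype m] [Fintype n]

theorem trace_transpose_mul_diagonal_mul {R : Type*} [CommSemiring R] [DecidableEq m]
    (d : m → R) (W : Matrix m n R) :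
    trace (Wᵀ * diagonal d * W) = ∑ i, d i * ∑ j, W i j ^ 2 := by
  simp only [trace, diag_apply, mul_apply, transpose_apply, diagonal_apply, mul_ite,
    mul_zero, sum_ite_eq', mem_univ, if_true, mul_sum, sq]
  rw [sum_comm]
  exact sum_congr rfl fun i _ => sum_congr rfl fun j _ => by ring

theorem sum_sum_sq_eq_card_of_transpose_mul_self_eq_one [DecidableEq n] {W : Matrix m n ℝ}
    (hW : Wᵀ * W = 1) : ∑ i, ∑ j, W i j ^ 2 = Fintype.card n := by
  calc ∑ i, ∑ j, W i j ^ 2 = trace (Wᵀ * W) := by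
        simp only [trace, diag_apply, mul_apply, transpose_apply, sq]
        exact sum_comm
    _ = Fintype.card n := by rw [hW, trace_one]

theorem sum_sq_le_one_of_transpose_mul_self_eq_one [DecidableEq n] {W : Matrix m n ℝ}
    (hW : Wᵀ * W = 1) (i : m) : ∑ j, W i j ^ 2 ≤ 1 := by
  set P := W * Wᵀ
  have hdiag : P i i = ∑ j, W i j ^ 2 := by simp [P, mul_apply, sq]
  have hidem : P * P = P := by
    rw [Matrix.mul_assoc, ← Matrix.mul_assoc Wᵀ, hW, Matrix.one_mul]
  have hsymm : ∀ k, P k i = P i k := fun k => by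
    simp only [P, mul_apply, transpose_apply, mul_comm]
  have hsq : P i i ^ 2 ≤ P i i :=
    calc P i i ^ 2 ≤ ∑ k, P i k ^ 2 :=
          single_le_sum (f := fun k => P i k ^ 2) (fun k _ => sq_nonneg _) (mem_univ i)
      _ = (P * P) i i := by simp only [mul_apply, hsymm, sq]
      _ = P i i := by rw [hidem]
  have hnonneg : 0 ≤ P i i := hdiag ▸ sum_nonneg fun j _ => sq_nonneg _
  rw [← hdiag]
  nlinarith

end Matrix

namespace Matrix.IsHermitian

variable {m n : Type*} [Fintype m] [Fintype n] [DecidableEq n] {A : Matrix n n ℝ}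
  (hA : A.IsHermitian)

theorem transpose_eigenvectorUnitary_mul_self :
    (hA.eigenvectorUnitary : Matrix n n ℝ)ᵀ * hA.eigenvectorUnitary = 1 := by
  simpa [star_eq_conjTranspose] using Matrix.mem_unitaryGroup_iff'.mp hA.eigenvectorUnitary.2

theorem eigenvectorUnitary_mul_transpose_self :
    hA.eigenvectorUnitary * (hA.eigenvectorUnitary : Matrix n n ℝ)ᵀ = 1 := by
  simpa [star_eq_conjTranspose] using Matrix.mem_unitaryGroup_iff.mp hA.eigenvectorUnitary.2

theorem transpose_eigenvectorUnitary_mul_mul :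
    (hA.eigenvectorUnitary : Matrix n n ℝ)ᵀ * A * hA.eigenvectorUnitary =
      diagonal hA.eigenvalues := by
  simpa [star_eq_conjTranspose] using hA.conjStarAlgAut_star_eigenvectorUnitary

theorem trace_transpose_mul_mul (V : Matrix n m ℝ) :
    trace (Vᵀ * A * V) =
      ∑ i, hA.eigenvalues i * ∑ j, ((hA.eigenvectorUnitary : Matrix n n ℝ)ᵀ * V) i j ^ 2 := by
  rw [← trace_transpose_mul_diagonal_mul, ← hA.transpose_eigenvectorUnitary_mul_mul]
  conv_lhs => rw [← Matrix.one_mul V, ← hA.eigenvectorUnitary_mul_transpose_self]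
  simp only [transpose_mul, transpose_transpose, Matrix.mul_assoc]

theorem exists_trace_eq_sum_eigenvalues [DecidableEq m] (e : m ↪ n) :
    ∃ V : Matrix n m ℝ, Vᵀ * V = 1 ∧ trace (Vᵀ * A * V) = ∑ j, hA.eigenvalues (e j) := by
  refine ⟨(hA.eigenvectorUnitary : Matrix n n ℝ).submatrix id e, ?_, ?_⟩
  · rw [transpose_submatrix, ← submatrix_mul _ _ _ _ _ Function.bijective_id,
      hA.transpose_eigenvectorUnitary_mul_self, submatrix_one_embedding]
  · change _ = ∑ j, (hA.eigenvalues ∘ e) j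
    rw [transpose_submatrix, ← trace_diagonal, ← submatrix_diagonal_embedding,
      ← hA.transpose_eigenvectorUnitary_mul_mul, submatrix_mul _ _ _ id _ Function.bijective_id,
      submatrix_mul _ _ _ id _ Function.bijective_id, submatrix_id_id]

end Matrix.IsHermitian

theorem stmt_15_general {N : ℕ} (A : Matrix (Fin N) (Fin N) ℝ) (hA : A.IsHermitian)
    (μ : Fin N → ℝ) (hμ : Monotone μ)
    (hperm : ∃ σ : Equiv.Perm (Fin N), μ = hA.eigenvalues ∘ σ)
    (q : ℕ) (hqN : q ≤ N) :
    IsLeast {r : ℝ | ∃ V : Matrix (Fin N) (Fin q) ℝ,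
        Vᵀ * V = 1 ∧ r = Matrix.trace (Vᵀ * A * V)}
      (∑ j : Fin q, μ (Fin.castLE hqN j)) := by
  obtain ⟨σ, rfl⟩ := hperm
  constructor
  · obtain ⟨V, hV, htr⟩ :=
      hA.exists_trace_eq_sum_eigenvalues ((Fin.castLEEmb hqN).trans σ.toEmbedding)
    exact ⟨V, hV, htr.symm⟩
  · rintro _ ⟨V, hV, rfl⟩
    set W := (hA.eigenvectorUnitary : Matrix (Fin N) (Fin N) ℝ)ᵀ * V
    have hW : Wᵀ * W = 1 := by
      rw [transpose_mul, transpose_transpose, Matrix.mul_assoc, ← Matrix.mul_assoc _ _ V,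
        hA.eigenvectorUnitary_mul_transpose_self, Matrix.one_mul, hV]
    rw [hA.trace_transpose_mul_mul, ← Equiv.sum_comp σ]
    refine hμ.sum_castLE_le_sum_mul hqN (fun i => sum_nonneg fun j _ => sq_nonneg _)
      (fun i => sum_sq_le_one_of_transpose_mul_self_eq_one hW _) ?_
    rw [Equiv.sum_comp σ (fun i => ∑ j, W i j ^ 2),
      sum_sum_sq_eq_card_of_transpose_mul_self_eq_one hW, Fintype.card_fin]

/-- Ky Fan minimum principle: for a real symmetric `N × N` matrix `A` with eigenvalues
`μ 0 ≤ ⋯ ≤ μ (N−1)` listed with multiplicity in nondecreasing order, the sum of the `q`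
smallest eigenvalues is the minimum of `tr (Vᵀ A V)` over all `N × q` matrices `V` with
orthonormal columns (`Vᵀ V = 1`). -/
theorem stmt_15 {N : ℕ} (A : Matrix (Fin N) (Fin N) ℝ) (hA : A.IsHermitian)
    (μ : Fin N → ℝ) (hμ : Monotone μ)
    (hperm : ∃ σ : Equiv.Perm (Fin N), μ = hA.eigenvalues ∘ σ)
    (q : ℕ) (hq1 : 1 ≤ q) (hqN : q ≤ N) :
    IsLeast {r : ℝ | ∃ V : Matrix (Fin N) (Fin q) ℝ,
        Vᵀ * V = 1 ∧ r = Matrix.trace (Vᵀ * A * V)}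
      (∑ j : Fin q, μ (Fin.castLE hqN j)) :=
  stmt_15_general A hA μ hμ hperm q hqN
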